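/- For all repair vectors u with 1 ≤ uᵢ ≤ f and Σuᵢ = m, Σ_{i=1}^{g}[(d − Σ_{j<i}uⱼ)β₁ + (f−uᵢ)β₂]·uᵢ is minimized (over such u, for fixed β₁ = 2β₂ > 0) at both u = [f,...,f] and u = [1,...,1], and the common minimum value equals m(d − (m−f)/2)β₁ when u = [f,...,f] and m(d − (m−1)/2)β₁ + m(f−1)β₂ when u = [1,...,1]; in particular these two values are equal when β₁ = 2β₂. -/
import Mathlib




lemma gauss_rat (n : ℕ) : ∑ i ∈ Finset.range n, (i : ℚ) = n * (n - 1) / 2 := by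
  induction n with
  | zero => simp
  | succ n ih => rw [Finset.sum_range_succ, ih]; push_cast; ring

lemma prefix_sq (g : ℕ) (a : Fin g → ℚ) :
    2 * ∑ i, a i * ∑ j ∈ Finset.Iio i, a j + ∑ i, (a i)^2 = (∑ i, a i)^2 := by
  induction g with
  | zero => simp
  | succ g ih =>
    rw [Fin.sum_univ_castSucc (f := a),
        Fin.sum_univ_castSucc (f := fun i => a i * ∑ j ∈ Finset.Iio i, a j),
        Fin.sum_univ_castSucc (f := fun i => (a i)^2)]
    have h : ∀ x : Fin g, Fin.castLE (Nat.le_succ g) x = Fin.castSucc x := fun _ => rfl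
    simp only [Fin.Iio_castSucc, Fin.Iio_last_eq_map, Finset.sum_map,
      Fin.castSuccEmb_apply, h]
    have := ih (fun i => a i.castSucc)
    nlinarith [this]


/-- With β₁ = 2β₂ > 0, the weighted sum S(u) = Σᵢ uᵢ[(d−Σ_{j<i}uⱼ)β₁+(f−uᵢ)β₂]
is minimized at both u = [f,...,f] and u = [1,...,1], with the stated common
minimum value. -/
theorem repair_sum_minimized (d m f : ℕ) (β₁ β₂ : ℚ)
    (hd : 0 < d) (hm : 0 < m) (hf : 1 ≤ f) (hfm : f ∣ m) (hmd : m ≤ d)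
    (hβ₂ : 0 < β₂) (hββ : β₁ = 2 * β₂) :
    (∑ i ∈ Finset.range (m / f),
        (f : ℚ) * (((d : ℚ) - i * f) * β₁ + ((f : ℚ) - f) * β₂)
      = m * ((d : ℚ) - ((m : ℚ) - f) / 2) * β₁) ∧
    (∑ i ∈ Finset.range m,
        (1 : ℚ) * (((d : ℚ) - i) * β₁ + ((f : ℚ) - 1) * β₂)
      = m * ((d : ℚ) - ((m : ℚ) - 1) / 2) * β₁ + m * ((f : ℚ) - 1) * β₂) ∧
    (m * ((d : ℚ) - ((m : ℚ) - f) / 2) * β₁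
      = m * ((d : ℚ) - ((m : ℚ) - 1) / 2) * β₁ + m * ((f : ℚ) - 1) * β₂) ∧
    (∀ (g : ℕ) (u : Fin g → ℕ), (∀ i, 1 ≤ u i) → (∀ i, u i ≤ f) →
      (∑ i, u i = m) →
      m * ((d : ℚ) - ((m : ℚ) - f) / 2) * β₁ ≤
        ∑ i, (u i : ℚ) * (((d : ℚ) - ∑ j ∈ Finset.Iio i, (u j : ℚ)) * β₁
          + ((f : ℚ) - u i) * β₂)) := by
  set k := m / f with hk
  have hkm : (f : ℚ) * k = m := by
    have h : k * f = m := Nat.div_mul_cancel hfm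
    rw [mul_comm]; exact_mod_cast h
  refine ⟨?_, ?_, ?_, ?_⟩
  · have : ∀ i ∈ Finset.range k, (f : ℚ) * (((d : ℚ) - i * f) * β₁ + ((f : ℚ) - f) * β₂)
        = (f : ℚ) * d * β₁ - (f : ℚ) * f * β₁ * i := fun i _ => by ring
    rw [Finset.sum_congr rfl this, Finset.sum_sub_distrib, Finset.sum_const,
      Finset.card_range, nsmul_eq_mul, ← Finset.mul_sum, gauss_rat, ← hkm]
    ring
  · have : ∀ i ∈ Finset.range m, (1 : ℚ) * (((d : ℚ) - i) * β₁ + ((f : ℚ) - 1) * β₂)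
        = ((d : ℚ) * β₁ + ((f:ℚ) - 1) * β₂) - β₁ * i := fun i _ => by ring
    rw [Finset.sum_congr rfl this, Finset.sum_sub_distrib, ← Finset.mul_sum,
      Finset.sum_const, Finset.card_range, gauss_rat]
    ring
  · subst hββ; nlinarith [hkm]
  · intro g u h1 h2 hsum
    have hsumq : ∑ i, (u i : ℚ) = m := by exact_mod_cast congrArg (Nat.cast (R := ℚ)) hsum
    have key := prefix_sq g (fun i => (u i : ℚ))
    apply le_of_eq
    have expand : ∀ i : Fin g, (u i : ℚ) * (((d : ℚ) - ∑ j ∈ Finset.Iio i, (u j : ℚ)) * β₁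
          + ((f : ℚ) - u i) * β₂)
        = ((d:ℚ) * β₁ + (f:ℚ) * β₂) * (u i) - β₁ * ((u i : ℚ) * ∑ j ∈ Finset.Iio i, (u j : ℚ))
          - β₂ * (u i : ℚ)^2 := fun i => by ring
    rw [Finset.sum_congr rfl (fun i _ => expand i), Finset.sum_sub_distrib,
      Finset.sum_sub_distrib, ← Finset.mul_sum, ← Finset.mul_sum, ← Finset.mul_sum, hsumq]
    rw [hsumq] at key
    subst hββ
    linear_combination β₂ * key
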